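/- arXiv:1709.09139 — 3 statements merged into one kernel-verified Lean document; each statement's English description precedes it below -/
import Mathlib

section
/- Let g be the 4-dimensional Lie algebra with brackets [e1,e2]=e2-λe3, [e1,e3]=λe2+e3, [e1,e4]=2e4, [e2,e3]=-e4, endowed with the metric making (e1/2, e2, e3, e4) orthonormal, and let J be the almost complex structure defined by Je1=-2e4, Je2=e3, Je3=-e2, Je4=e1/2. Then the Nijenhuis tensor of J vanishes, i.e., J is integrable. -/
/-- The bracket [e1,e2]=e2-λe3, [e1,e3]=λe2+e3, [e1,e4]=2e4, [e2,e3]=-e4. -/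
def br (lam : ℝ) (X Y : Fin 4 → ℝ) : Fin 4 → ℝ :=
  ![0,
    (X 0 * Y 1 - X 1 * Y 0) + lam * (X 0 * Y 2 - X 2 * Y 0),
    -lam * (X 0 * Y 1 - X 1 * Y 0) + (X 0 * Y 2 - X 2 * Y 0),
    2 * (X 0 * Y 3 - X 3 * Y 0) - (X 1 * Y 2 - X 2 * Y 1)]

/-- The almost complex structure Je1=-2e4, Je2=e3, Je3=-e2, Je4=(1/2)e1. -/
noncomputable def Jmap (X : Fin 4 → ℝ) : Fin 4 → ℝ :=
  ![(1 / 2) * X 3, -X 2, X 1, -2 * X 0]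

/-- the Nijenhuis tensor of J vanishes, i.e. J is integrable. -/
theorem stmt_4 (lam : ℝ) (X Y : Fin 4 → ℝ) :
    br lam (Jmap X) (Jmap Y) - Jmap (br lam (Jmap X) Y) - Jmap (br lam X (Jmap Y))
      - br lam X Y = 0 := by
  ext i
  fin_cases i <;>
    simp only [Fin.zero_eta, Fin.mk_one, Fin.reduceFinMk, br, Jmap, Pi.sub_apply, Pi.zero_apply,
      Matrix.cons_val] <;>
    ring
end

section
/- Let g be the 4-dimensional Lie algebra with brackets [e1,e2]=e2-λe3, [e1,e3]=λe2+e3, [e1,e4]=2e4, [e2,e3]=-e4. The endomorphism J defined by Je1=-2e4, Je2=e3, Je3=-e2, Je4=(1/2)e1 satisfies J²=-Id, and the 2-form ω(X,Y)=g(JX,Y), where g is the metric making (e1/2,e2,e3,e4) orthonormal, equals -2e^{14}+e^{23} and is closed. -/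
/-- The metric making (e1/2, e2, e3, e4) orthonormal, i.e. g(e1,e1)=4. -/
def gmet (X Y : Fin 4 → ℝ) : ℝ :=
  4 * (X 0 * Y 0) + X 1 * Y 1 + X 2 * Y 2 + X 3 * Y 3

section

variable (lam : ℝ) (X Y Z : Fin 4 → ℝ)

theorem br_swap : br lam Y X = -br lam X Y := by
  funext i
  fin_cases i <;>
    simp only [br, Pi.neg_apply, Fin.zero_eta, Fin.mk_one, Fin.reduceFinMk,
      Matrix.cons_val] <;> ring

theorem br_neg_left : br lam (-X) Y = -br lam X Y := by
  funext i
  fin_cases i <;>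
    simp only [br, Pi.neg_apply, Fin.zero_eta, Fin.mk_one, Fin.reduceFinMk,
      Matrix.cons_val] <;> ring

theorem br_jacobi :
    br lam (br lam X Y) Z + br lam (br lam Y Z) X + br lam (br lam Z X) Y = 0 := by
  funext i
  fin_cases i <;>
    simp only [br, Pi.add_apply, Pi.zero_apply, Fin.zero_eta, Fin.mk_one, Fin.reduceFinMk,
      Matrix.cons_val] <;> ring

theorem Jmap_Jmap : Jmap (Jmap X) = -X := by
  funext i
  fin_cases i <;> simp [Jmap]

theorem gmet_Jmap : gmet (Jmap X) Y = -2 * (X 0 * Y 3 - X 3 * Y 0) + (X 1 * Y 2 - X 2 * Y 1) := by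
  simp only [gmet, Jmap, Matrix.cons_val]
  ring

theorem gmet_Jmap_eq_neg_br : gmet (Jmap X) Y = -br lam X Y 3 := by
  rw [gmet_Jmap]
  simp only [br, Matrix.cons_val]
  ring

theorem gmet_Jmap_closed :
    -(gmet (Jmap (br lam X Y)) Z) + gmet (Jmap (br lam X Z)) Y
      - gmet (Jmap (br lam Y Z)) X = 0 := by
  have jacobi₃ := congrFun (br_jacobi lam X Y Z) 3
  simp only [gmet_Jmap_eq_neg_br lam, br_swap lam Z X, br_neg_left, Pi.add_apply,
    Pi.neg_apply, Pi.zero_apply] at jacobi₃ ⊢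
  linarith

end

/-- J² = -Id, the form ω(X,Y)=g(JX,Y) equals -2e^{14}+e^{23}, and ω is
closed for the Chevalley–Eilenberg differential. -/
theorem stmt_5 (lam : ℝ) :
    (∀ X : Fin 4 → ℝ, Jmap (Jmap X) = -X) ∧
    (∀ X Y : Fin 4 → ℝ, gmet (Jmap X) Y =
      -2 * (X 0 * Y 3 - X 3 * Y 0) + (X 1 * Y 2 - X 2 * Y 1)) ∧
    (∀ X Y Z : Fin 4 → ℝ,
      -(gmet (Jmap (br lam X Y)) Z) + gmet (Jmap (br lam X Z)) Y
        - gmet (Jmap (br lam Y Z)) X = 0) :=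
  ⟨Jmap_Jmap, gmet_Jmap, gmet_Jmap_closed lam⟩
end

section
/- Every almost-Kähler structure on the 4-dimensional Lie algebra with brackets [e1,e2]=e2-λe3, [e1,e3]=λe2+e3, [e1,e4]=2e4, [e2,e3]=-e4, whose metric makes ((1/k)e1, e2, e3, e4) orthonormal for some k>0 and whose fundamental 2-form is compatible with the orientation -k e^{1234}, is Kähler. Concretely: if ω is a closed 2-form, J an endomorphism with J²=-Id, g the metric above, ω(·,·)=g(J·,·), g(J·,J·)=g(·,·), and ω∧ω = -2k e^{1234} up to positive scale, then k=2, ω = ∓2e^{14}±e^{23}, and the Nijenhuis tensor of J vanishes. -/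
/-- The metric making ((1/k)e1, e2, e3, e4) orthonormal, i.e. g(e1,e1)=k². -/
def gk (k : ℝ) (X Y : Fin 4 → ℝ) : ℝ :=
  k ^ 2 * (X 0 * Y 0) + X 1 * Y 1 + X 2 * Y 2 + X 3 * Y 3

/-- basis vectors -/
def E (i : Fin 4) : Fin 4 → ℝ := Pi.single i 1

section

variable {k lam : ℝ} {J : (Fin 4 → ℝ) →ₗ[ℝ] (Fin 4 → ℝ)}

lemma E_apply (i j : Fin 4) : E i j = if j = i then 1 else 0 := Pi.single_apply i 1 j

lemma apply_eq_sum_smul_E (J : (Fin 4 → ℝ) →ₗ[ℝ] (Fin 4 → ℝ)) (X : Fin 4 → ℝ) :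
    J X = ∑ i, X i • J (E i) := by
  rw [J.pi_apply_eq_sum_univ X]
  congr! with i - j
  simp [E_apply, eq_comm]

lemma gk_comm (X Y : Fin 4 → ℝ) : gk k X Y = gk k Y X := by
  simp only [gk]; ring

lemma gk_E_zero (X : Fin 4 → ℝ) : gk k X (E 0) = k ^ 2 * X 0 := by
  simp [gk, E_apply]

lemma gk_E_of_ne_zero {j : Fin 4} (hj : j ≠ 0) (X : Fin 4 → ℝ) : gk k X (E j) = X j := by
  fin_cases j <;> simp_all [gk, E_apply]

lemma gk_apply_left_eq_neg (hJ2 : ∀ X, J (J X) = -X)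
    (horth : ∀ X Y, gk k (J X) (J Y) = gk k X Y) (X Y : Fin 4 → ℝ) : gk k (J X) Y = -gk k (J Y) X := by
  have h := horth X (J Y)
  rw [hJ2, gk_comm] at h
  simp only [gk, Pi.neg_apply] at h ⊢
  linarith

lemma br_E0_E1 : br lam (E 0) (E 1) = E 1 - lam • E 2 := by
  funext l; fin_cases l <;> simp [br, E_apply]
lemma br_E0_E2 : br lam (E 0) (E 2) = lam • E 1 + E 2 := by
  funext l; fin_cases l <;> simp [br, E_apply]
lemma br_E0_E3 : br lam (E 0) (E 3) = (2 : ℝ) • E 3 := by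
  funext l; fin_cases l <;> simp [br, E_apply]
lemma br_E1_E2 : br lam (E 1) (E 2) = -E 3 := by
  funext l; fin_cases l <;> simp [br, E_apply]
lemma br_E1_E3 : br lam (E 1) (E 3) = 0 := by
  funext l; fin_cases l <;> simp [br, E_apply]
lemma br_E2_E3 : br lam (E 2) (E 3) = 0 := by
  funext l; fin_cases l <;> simp [br, E_apply]

lemma entry_antisymm (hskew : ∀ X Y, gk k (J X) Y = -gk k (J Y) X) {i j : Fin 4} (hi : i ≠ 0)
    (hj : j ≠ 0) : J (E i) j = -J (E j) i := by
  simpa [gk_E_of_ne_zero, hi, hj] using hskew (E i) (E j)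

lemma sq_mul_entry_zero (hskew : ∀ X Y, gk k (J X) Y = -gk k (J Y) X) {i : Fin 4} (hi : i ≠ 0) :
    k ^ 2 * J (E i) 0 = -J (E 0) i := by
  simpa [gk_E_zero, gk_E_of_ne_zero, hi] using hskew (E i) (E 0)

lemma entry_diag (hskew : ∀ X Y, gk k (J X) Y = -gk k (J Y) X) (hk : k ≠ 0) (i : Fin 4) :
    J (E i) i = 0 := by
  have h := hskew (E i) (E i)
  by_cases hi : i = 0
  · subst hi
    rw [gk_E_zero, self_eq_neg] at h
    exact (mul_eq_zero.mp h).resolve_left (pow_ne_zero 2 hk)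
  · rwa [gk_E_of_ne_zero hi, self_eq_neg] at h

lemma sum_entry_mul_entry (hJ2 : ∀ X, J (J X) = -X) (i l : Fin 4) :
    ∑ j, J (E i) j * J (E j) l = -E i l := by
  have h := congrFun (hJ2 (E i)) l
  rw [apply_eq_sum_smul_E J (J (E i))] at h
  simpa [Finset.sum_apply] using h

lemma closed_entries (hk : k ≠ 0) (hskew : ∀ X Y, gk k (J X) Y = -gk k (J Y) X)
    (hclosed : ∀ X Y Z, -gk k (J (br lam X Y)) Z + gk k (J (br lam X Z)) Y
      - gk k (J (br lam Y Z)) X = 0) :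
    J (E 1) 3 = 0 ∧ J (E 2) 3 = 0 ∧ k ^ 2 * J (E 3) 0 = 2 * J (E 1) 2 := by
  have c012 := hclosed (E 0) (E 1) (E 2)
  have c013 := hclosed (E 0) (E 1) (E 3)
  have c023 := hclosed (E 0) (E 2) (E 3)
  rw [br_E0_E1, br_E0_E2, br_E1_E2] at c012
  rw [br_E0_E1, br_E0_E3, br_E1_E3] at c013
  rw [br_E0_E2, br_E0_E3, br_E2_E3] at c023
  simp only [map_sub, map_add, map_smul, map_neg, map_zero, gk_E_zero, gk_E_of_ne_zero, ne_eq,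
    Fin.reduceEq, not_false_eq_true, smul_eq_mul, Pi.sub_apply, Pi.add_apply, Pi.smul_apply,
    Pi.neg_apply, Pi.zero_apply, entry_diag hskew hk] at c012 c013 c023
  have h21 := entry_antisymm hskew (i := 2) (j := 1) (by decide) (by decide)
  have h31 := entry_antisymm hskew (i := 3) (j := 1) (by decide) (by decide)
  have h32 := entry_antisymm hskew (i := 3) (j := 2) (by decide) (by decide)
  have hdet : 9 + lam ^ 2 ≠ 0 := by positivity
  have h13 : (9 + lam ^ 2) * J (E 1) 3 = 0 := by
    linear_combination -3 * c013 - lam * c023 + 6 * h31 + 2 * lam * h32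
  have h23 : (9 + lam ^ 2) * J (E 2) 3 = 0 := by
    linear_combination lam * c013 - 3 * c023 - 2 * lam * h31 + 6 * h32
  refine ⟨(mul_eq_zero.mp h13).resolve_left hdet, (mul_eq_zero.mp h23).resolve_left hdet, ?_⟩
  linear_combination c012 - h21

noncomputable def J₀ (X : Fin 4 → ℝ) : Fin 4 → ℝ := ![X 3 / 2, -X 2, X 1, -(2 * X 0)]

theorem eq_two_and_eq_smul_J₀ (hk : 0 < k) (hJ2 : ∀ X, J (J X) = -X)
    (horth : ∀ X Y, gk k (J X) (J Y) = gk k X Y)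
    (hclosed : ∀ X Y Z, -gk k (J (br lam X Y)) Z + gk k (J (br lam X Z)) Y
      - gk k (J (br lam Y Z)) X = 0) :
    k = 2 ∧ ∃ c : ℝ, c * c = 1 ∧ ∀ X, J X = c • J₀ X := by
  have hk0 : k ≠ 0 := hk.ne'
  have hskew := gk_apply_left_eq_neg hJ2 horth
  obtain ⟨h13, h23, h30⟩ := closed_entries hk0 hskew hclosed
  have hdiag := entry_diag hskew hk0
  have h21 := entry_antisymm hskew (i := 2) (j := 1) (by decide) (by decide)
  have h31 := entry_antisymm hskew (i := 3) (j := 1) (by decide) (by decide)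
  have h32 := entry_antisymm hskew (i := 3) (j := 2) (by decide) (by decide)
  rw [h13, neg_zero] at h31
  rw [h23, neg_zero] at h32
  have h10 := sq_mul_entry_zero hskew (i := 1) (by decide)
  have h20 := sq_mul_entry_zero hskew (i := 2) (by decide)
  have h03 := sq_mul_entry_zero hskew (i := 3) (by decide)
  have s00 := sum_entry_mul_entry hJ2 0 0
  have s11 := sum_entry_mul_entry hJ2 1 1
  have s33 := sum_entry_mul_entry hJ2 3 3
  simp only [Fin.sum_univ_four, E_apply, if_true, hdiag, h13, h23, h31, h32,
    mul_zero, add_zero, zero_add] at s00 s11 s33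
  set c := J (E 1) 2
  have hsq : J (E 0) 1 ^ 2 + J (E 0) 2 ^ 2 = 0 := by
    linear_combination k ^ 2 * (s33 - s00) + J (E 0) 1 * h10 + J (E 0) 2 * h20
  have h01 : J (E 0) 1 = 0 := by nlinarith [sq_nonneg (J (E 0) 1), sq_nonneg (J (E 0) 2)]
  have h02 : J (E 0) 2 = 0 := by nlinarith [sq_nonneg (J (E 0) 1), sq_nonneg (J (E 0) 2)]
  have hc : c * c = 1 := by linear_combination -s11 + J (E 1) 0 * h01 + c * h21
  have hk4 : k ^ 2 = 2 ^ 2 := by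
    linear_combination k ^ 2 * s33 - J (E 0) 3 * h30 - 2 * c * h03 + 2 * c * h30 + 4 * hc
  obtain rfl : k = 2 := (sq_eq_sq₀ hk.le zero_le_two).mp hk4
  refine ⟨rfl, c, hc, fun X => ?_⟩
  have h10' : J (E 1) 0 = 0 := by linear_combination (h10 - h01) / 4
  have h20' : J (E 2) 0 = 0 := by linear_combination (h20 - h02) / 4
  have h30' : J (E 3) 0 = c / 2 := by linear_combination h30 / 4
  have h03' : J (E 0) 3 = -(2 * c) := by linear_combination h03 - h30
  rw [apply_eq_sum_smul_E J X]
  funext l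
  fin_cases l <;> simp [Fin.sum_univ_four, J₀, hdiag, h01, h02, h03', h10', h21, h13, h20', h23,
    h30', h31, h32] <;> ring

lemma gk_two_smul_J₀ (c : ℝ) (X Y : Fin 4 → ℝ) :
    gk 2 (c • J₀ X) Y = c * (-2 * (X 0 * Y 3 - X 3 * Y 0) + (X 1 * Y 2 - X 2 * Y 1)) := by
  simp only [gk, J₀, Pi.smul_apply, smul_eq_mul, Matrix.cons_val]
  ring

lemma nijenhuis_smul_J₀_eq_zero {c : ℝ} (hc : c * c = 1) (X Y : Fin 4 → ℝ) :
    br lam (c • J₀ X) (c • J₀ Y) - c • J₀ (br lam (c • J₀ X) Y) - c • J₀ (br lam X (c • J₀ Y))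
      - br lam X Y = 0 := by
  rcases mul_self_eq_one_iff.mp hc with rfl | rfl <;>
  · funext l
    fin_cases l <;> simp [br, J₀] <;> ring

end

theorem stmt_11_general (lam k : ℝ) (hk : 0 < k)
    (J : (Fin 4 → ℝ) →ₗ[ℝ] (Fin 4 → ℝ))
    (hJ2 : ∀ X : Fin 4 → ℝ, J (J X) = -X)
    (horth : ∀ X Y : Fin 4 → ℝ, gk k (J X) (J Y) = gk k X Y)
    (hclosed : ∀ X Y Z : Fin 4 → ℝ,
      -(gk k (J (br lam X Y)) Z) + gk k (J (br lam X Z)) Y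
        - gk k (J (br lam Y Z)) X = 0) :
    k = 2 ∧
    ((∀ X Y : Fin 4 → ℝ, gk k (J X) Y =
        -2 * (X 0 * Y 3 - X 3 * Y 0) + (X 1 * Y 2 - X 2 * Y 1)) ∨
     (∀ X Y : Fin 4 → ℝ, gk k (J X) Y =
        2 * (X 0 * Y 3 - X 3 * Y 0) - (X 1 * Y 2 - X 2 * Y 1))) ∧
    (∀ X Y : Fin 4 → ℝ,
      br lam (J X) (J Y) - J (br lam (J X) Y) - J (br lam X (J Y)) - br lam X Y = 0) := by
  obtain ⟨rfl, c, hc, hJ⟩ := eq_two_and_eq_smul_J₀ hk hJ2 horth hclosed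
  refine ⟨rfl, ?_, fun X Y => by simpa only [hJ] using nijenhuis_smul_J₀_eq_zero hc X Y⟩
  simp only [hJ, gk_two_smul_J₀]
  rcases mul_self_eq_one_iff.mp hc with rfl | rfl
  · exact Or.inl fun X Y => one_mul _
  · exact Or.inr fun X Y => by ring

/-- every almost-Kähler structure (ω,J,g) on this Lie algebra with
g making ((1/k)e1,e2,e3,e4) orthonormal (k>0), ω(·,·)=g(J·,·) closed, J²=-Id,
J g-orthogonal, and ω∧ω a positive multiple of -2k e^{1234}, satisfies k=2,
ω = ∓2e^{14} ± e^{23}, and has vanishing Nijenhuis tensor (hence is Kähler). -/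
theorem stmt_11 (lam k : ℝ) (hk : 0 < k)
    (J : (Fin 4 → ℝ) →ₗ[ℝ] (Fin 4 → ℝ))
    (hJ2 : ∀ X : Fin 4 → ℝ, J (J X) = -X)
    (horth : ∀ X Y : Fin 4 → ℝ, gk k (J X) (J Y) = gk k X Y)
    (hclosed : ∀ X Y Z : Fin 4 → ℝ,
      -(gk k (J (br lam X Y)) Z) + gk k (J (br lam X Z)) Y
        - gk k (J (br lam Y Z)) X = 0)
    (horient : ∃ t : ℝ, 0 < t ∧
      (∑ σ : Equiv.Perm (Fin 4), ((Equiv.Perm.sign σ : ℤ) : ℝ) *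
        gk k (J (E (σ 0))) (E (σ 1)) * gk k (J (E (σ 2))) (E (σ 3)))
        = t * (-2 * k)) :
    k = 2 ∧
    ((∀ X Y : Fin 4 → ℝ, gk k (J X) Y =
        -2 * (X 0 * Y 3 - X 3 * Y 0) + (X 1 * Y 2 - X 2 * Y 1)) ∨
     (∀ X Y : Fin 4 → ℝ, gk k (J X) Y =
        2 * (X 0 * Y 3 - X 3 * Y 0) - (X 1 * Y 2 - X 2 * Y 1))) ∧
    (∀ X Y : Fin 4 → ℝ,
      br lam (J X) (J Y) - J (br lam (J X) Y) - J (br lam X (J Y)) - br lam X Y = 0) :=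
  stmt_11_general lam k hk J hJ2 horth hclosed
end
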